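/- Let (A,e) be a J(α)-algebra (α ≠ 0,1) satisfying the Martindale-like conditions (i)–(iii), and let f be a nullifying function on A. Then f(a_i, b_i) = 0 for all a_i, b_i ∈ A_i and each i ∈ {1, 0, α}. -/
import Mathlib


/-- Composite of left multiplications: `Lmul [t₁,…,t_r] x = t₁ * (t₂ * (⋯ * (t_r * x)))`. -/
def Lmul {A : Type*} [Mul A] (ts : List A) (x : A) : A := ts.foldr (· * ·) x

/-- A nullifying function on the nonempty finite sequences of `A`, with associated
positive integer `r` for axiom (V). -/
def IsNullifying {A : Type*} [NonUnitalNonAssocCommRing A] (f : List A → A) (r : ℕ) : Prop :=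
  0 < r ∧
  -- (I) permutation invariance
  (∀ l l' : List A, l.Perm l' → f l = f l') ∧
  -- (II)
  (∀ s t : List A, s ≠ [] → t ≠ [] → (f (s ++ [t.sum]) = f (s ++ t) ↔ f t = 0)) ∧
  -- (III)
  (∀ x : A, f [x] = 0) ∧
  -- (IV)
  (∀ s : List A, s ≠ [] → f (s ++ [(0 : A)]) = f s) ∧
  -- (V)
  (∀ ts : List A, ts.length = r → ∀ l : List A, Lmul ts (f l) = f (l.map (Lmul ts)))
/-- The `lam`-eigenspace (as a set) of left multiplication by `e`. -/
def eigSet {F A : Type*} [Field F] [NonUnitalNonAssocCommRing A] [Module F A]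
    (e : A) (lam : F) : Set A := {x | e * x = lam • x}

/-- `(A, e)` is a `J(α)`-algebra: `e` is idempotent, `α ≠ 0, 1`, `A` decomposes as the sum
of the `1`-, `0`- and `α`-eigenspaces of `L_e`, and the Jordan-type fusion law holds. -/
structure IsJAlg {F A : Type*} [Field F] [NonUnitalNonAssocCommRing A] [Module F A]
    (e : A) (α : F) : Prop where
  idem : e * e = e
  hα0 : α ≠ 0
  hα1 : α ≠ 1
  decomp : ∀ x : A, ∃ x1 ∈ eigSet e (1 : F), ∃ x0 ∈ eigSet e (0 : F), ∃ xa ∈ eigSet e α,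
    x = x1 + x0 + xa
  f11 : ∀ x ∈ eigSet e (1 : F), ∀ y ∈ eigSet e (1 : F), x * y ∈ eigSet e (1 : F)
  f10 : ∀ x ∈ eigSet e (1 : F), ∀ y ∈ eigSet e (0 : F), x * y = 0
  f1a : ∀ x ∈ eigSet e (1 : F), ∀ y ∈ eigSet e α, x * y ∈ eigSet e α
  f00 : ∀ x ∈ eigSet e (0 : F), ∀ y ∈ eigSet e (0 : F), x * y ∈ eigSet e (0 : F)
  f0a : ∀ x ∈ eigSet e (0 : F), ∀ y ∈ eigSet e α, x * y ∈ eigSet e α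
  faa : ∀ x ∈ eigSet e α, ∀ y ∈ eigSet e α, ∃ z1 ∈ eigSet e (1 : F), ∃ z0 ∈ eigSet e (0 : F),
    x * y = z1 + z0

/-- Martindale-like conditions (i)–(iii) for a `J(α)`-algebra. -/
def MartindaleJ {F A : Type*} [Field F] [NonUnitalNonAssocCommRing A] [Module F A]
    (e : A) (α : F) : Prop :=
  (∀ a ∈ eigSet e (1 : F), (∀ t ∈ eigSet e α, t * a = 0) → a = 0) ∧
  (∀ a ∈ eigSet e (0 : F), (∀ t ∈ eigSet e α, t * a = 0) → a = 0) ∧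
  (∀ a ∈ eigSet e (0 : F), (∀ t ∈ eigSet e (0 : F), t * a = 0) → a = 0) ∧
  (∀ a ∈ eigSet e α, (∀ t ∈ eigSet e (0 : F), t * a = 0) → a = 0)

section Infra
set_option linter.unusedSectionVars false

variable {F A : Type*} [Field F] [NonUnitalNonAssocCommRing A] [Module F A]
  [SMulCommClass F A A] [IsScalarTower F A A]

theorem eig_mem {e x : A} {lam : F} : x ∈ eigSet e lam ↔ e * x = lam • x := Iff.rfl

theorem eig_zero (e : A) (lam : F) : (0:A) ∈ eigSet e lam := by
  simp [eigSet]

theorem eig_add {e : A} {lam : F} {x y : A} (hx : x ∈ eigSet e lam) (hy : y ∈ eigSet e lam) :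
    x + y ∈ eigSet e lam := by
  have hx' : e * x = lam • x := hx
  have hy' : e * y = lam • y := hy
  show e * (x + y) = lam • (x + y)
  rw [mul_add, hx', hy', smul_add]

theorem eig_smul {e : A} {lam : F} (c : F) {x : A} (hx : x ∈ eigSet e lam) :
    c • x ∈ eigSet e lam := by
  have hx' : e * x = lam • x := hx
  show e * (c • x) = lam • (c • x)
  rw [mul_smul_comm, hx', smul_comm]

theorem eig_neg {e : A} {lam : F} {x : A} (hx : x ∈ eigSet e lam) : -x ∈ eigSet e lam := by
  have hx' : e * x = lam • x := hx
  show e * (-x) = lam • (-x)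
  rw [mul_neg, hx', smul_neg]

theorem eig_sub {e : A} {lam : F} {x y : A} (hx : x ∈ eigSet e lam) (hy : y ∈ eigSet e lam) :
    x - y ∈ eigSet e lam := by
  rw [sub_eq_add_neg]; exact eig_add hx (eig_neg hy)

section WithAlg

variable {e : A} {α : F}

theorem e_mem1 (h : IsJAlg e α) : e ∈ eigSet e (1:F) := by
  show e * e = (1:F) • e
  rw [h.idem, one_smul]

theorem mul10 (h : IsJAlg e α) {x y : A} (hx : x ∈ eigSet e (1:F)) (hy : y ∈ eigSet e (0:F)) :
    x * y = 0 := h.f10 x hx y hy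

theorem mul01 (h : IsJAlg e α) {x y : A} (hx : x ∈ eigSet e (0:F)) (hy : y ∈ eigSet e (1:F)) :
    x * y = 0 := by rw [mul_comm]; exact h.f10 y hy x hx

theorem mul00 (h : IsJAlg e α) {x y : A} (hx : x ∈ eigSet e (0:F)) (hy : y ∈ eigSet e (0:F)) :
    x * y ∈ eigSet e (0:F) := h.f00 x hx y hy

theorem mul0a (h : IsJAlg e α) {x y : A} (hx : x ∈ eigSet e (0:F)) (hy : y ∈ eigSet e α) :
    x * y ∈ eigSet e α := h.f0a x hx y hy

theorem mula0 (h : IsJAlg e α) {x y : A} (hx : x ∈ eigSet e α) (hy : y ∈ eigSet e (0:F)) :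
    x * y ∈ eigSet e α := by rw [mul_comm]; exact h.f0a y hy x hx

theorem mul1a (h : IsJAlg e α) {x y : A} (hx : x ∈ eigSet e (1:F)) (hy : y ∈ eigSet e α) :
    x * y ∈ eigSet e α := h.f1a x hx y hy

theorem mula1 (h : IsJAlg e α) {x y : A} (hx : x ∈ eigSet e α) (hy : y ∈ eigSet e (1:F)) :
    x * y ∈ eigSet e α := by rw [mul_comm]; exact h.f1a y hy x hx

/-- smul cancellation over a field -/
theorem smul_cancel {c : F} (hc : c ≠ 0) {x : A} (hx : c • x = 0) : x = 0 := by
  have := congrArg (fun y => c⁻¹ • y) hx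
  simpa [smul_smul, inv_mul_cancel₀ hc] using this

/-- Uniqueness of eigencomponents. -/
theorem uniq_zero (h : IsJAlg e α) {x1 x0 xa : A} (h1 : x1 ∈ eigSet e (1:F))
    (h0 : x0 ∈ eigSet e (0:F)) (ha : xa ∈ eigSet e α) (hs : x1 + x0 + xa = 0) :
    x1 = 0 ∧ x0 = 0 ∧ xa = 0 := by
  have h1' : e * x1 = (1:F) • x1 := h1
  have h0' : e * x0 = (0:F) • x0 := h0
  have ha' : e * xa = α • xa := ha
  have eq1 : x1 + α • xa = 0 := by
    have := congrArg (fun y => e * y) hs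
    simpa [mul_add, h1', h0', ha'] using this
  have eq2 : x1 + (α * α) • xa = 0 := by
    have := congrArg (fun y => e * y) eq1
    have ha2 : e * (α • xa) = (α * α) • xa := by
      rw [mul_smul_comm, ha', smul_smul]
    simpa [mul_add, h1', ha2] using this
  have hdiff : (α * α - α) • xa = 0 := by
    have := congrArg₂ (fun u v => u - v) eq2 eq1
    simp only [sub_zero] at this
    rw [← this, sub_smul]
    abel
  have hne : α * α - α ≠ 0 := by
    intro hcon
    have : α * (α - 1) = 0 := by rw [mul_sub, mul_one]; exact hcon
    rcases mul_eq_zero.mp this with h' | h'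
    · exact h.hα0 h'
    · exact h.hα1 (sub_eq_zero.mp h')
  have hxa : xa = 0 := smul_cancel hne hdiff
  have hx1 : x1 = 0 := by simpa [hxa] using eq1
  have hx0 : x0 = 0 := by simpa [hx1, hxa] using hs
  exact ⟨hx1, hx0, hxa⟩

theorem add_0a_zero (h : IsJAlg e α) {x0 xa : A} (h0 : x0 ∈ eigSet e (0:F))
    (ha : xa ∈ eigSet e α) (hs : x0 + xa = 0) : x0 = 0 ∧ xa = 0 := by
  have := uniq_zero h (eig_zero e 1) h0 ha (by simpa using hs)
  exact ⟨this.2.1, this.2.2⟩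

theorem mem_a0_zero (h : IsJAlg e α) {x : A} (ha : x ∈ eigSet e α) (h0 : x ∈ eigSet e (0:F)) :
    x = 0 := by
  have ha' : e * x = α • x := ha
  have h0' : e * x = (0:F) • x := h0
  apply smul_cancel h.hα0
  rw [← ha', h0', zero_smul]

theorem mem_1a_zero (h : IsJAlg e α) {x : A} (h1 : x ∈ eigSet e (1:F)) (ha : x ∈ eigSet e α) :
    x = 0 := by
  have h1' : e * x = (1:F) • x := h1
  have ha' : e * x = α • x := ha
  have : (1 - α) • x = 0 := by
    rw [sub_smul, ← h1', ha', sub_self]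
  exact smul_cancel (sub_ne_zero.mpr (Ne.symm h.hα1)) this

theorem mem_a_add10 (h : IsJAlg e α) {x d1 d0 : A} (ha : x ∈ eigSet e α)
    (h1 : d1 ∈ eigSet e (1:F)) (h0 : d0 ∈ eigSet e (0:F)) (hs : x = d1 + d0) : x = 0 := by
  have := uniq_zero h h1 h0 (eig_neg ha) (by rw [← hs]; abel)
  have hx : -x = 0 := this.2.2
  simpa using congrArg Neg.neg hx

end WithAlg

/-! Lmul lemmas -/

theorem Lmul_nil (x : A) : Lmul ([] : List A) x = x := rfl

theorem Lmul_cons (t : A) (ts : List A) (x : A) : Lmul (t :: ts) x = t * Lmul ts x := rfl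

theorem Lmul_append_single (ts : List A) (t x : A) :
    Lmul (ts ++ [t]) x = Lmul ts (t * x) := by
  simp [Lmul, List.foldr_append]

theorem Lmul_zero (ts : List A) : Lmul ts (0 : A) = 0 := by
  induction ts with
  | nil => rfl
  | cons t ts ih => rw [Lmul_cons, ih, mul_zero]

theorem Lmul_add (ts : List A) (x y : A) : Lmul ts (x + y) = Lmul ts x + Lmul ts y := by
  induction ts with
  | nil => rfl
  | cons t ts ih => rw [Lmul_cons, ih, mul_add]; rfl

theorem Lmul_smul (ts : List A) (c : F) (x : A) : Lmul ts (c • x) = c • Lmul ts x := by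
  induction ts with
  | nil => rfl
  | cons t ts ih => rw [Lmul_cons, ih, mul_smul_comm]; rfl

theorem Lmul_repl_e {e : A} {lam : F} (k : ℕ) {x : A} (hx : x ∈ eigSet e lam) :
    Lmul (List.replicate k e) x = (lam ^ k) • x := by
  induction k with
  | zero => simp [Lmul_nil]
  | succ k ih =>
    have hx' : e * x = lam • x := hx
    rw [List.replicate_succ, Lmul_cons, ih, mul_smul_comm, hx', smul_smul, pow_succ]

/-! A₀-chain lemmas -/

section Chains
variable {e : A} {α : F}

theorem Lmul_A0_Aa (h : IsJAlg e α) {ws : List A} (hws : ∀ w ∈ ws, w ∈ eigSet e (0:F))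
    {x : A} (hx : x ∈ eigSet e α) : Lmul ws x ∈ eigSet e α := by
  induction ws with
  | nil => exact hx
  | cons w ws ih =>
    rw [Lmul_cons]
    exact mul0a h (hws w (by simp)) (ih (fun u hu => hws u (by simp [hu])))

theorem Lmul_A0_A0 (h : IsJAlg e α) {ws : List A} (hws : ∀ w ∈ ws, w ∈ eigSet e (0:F))
    {x : A} (hx : x ∈ eigSet e (0:F)) : Lmul ws x ∈ eigSet e (0:F) := by
  induction ws with
  | nil => exact hx
  | cons w ws ih =>
    rw [Lmul_cons]
    exact mul00 h (hws w (by simp)) (ih (fun u hu => hws u (by simp [hu])))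

theorem Lmul_A0_A1_zero (h : IsJAlg e α) {ws : List A} (hne : ws ≠ [])
    (hws : ∀ w ∈ ws, w ∈ eigSet e (0:F)) {x : A} (hx : x ∈ eigSet e (1:F)) :
    Lmul ws x = 0 := by
  induction ws with
  | nil => exact absurd rfl hne
  | cons w ws ih =>
    rcases List.eq_nil_or_concat ws with h' | _
    · subst h'
      rw [Lmul_cons, Lmul_nil]
      exact mul01 h (hws w (by simp)) hx
    · by_cases hws0 : ws = []
      · subst hws0
        rw [Lmul_cons, Lmul_nil]
        exact mul01 h (hws w (by simp)) hx
      · rw [Lmul_cons, ih hws0 (fun u hu => hws u (by simp [hu])), mul_zero]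

/-- Peeling for A_α: if all A₀-chains of length k kill x ∈ A_α, then x = 0. -/
theorem peel_a (h : IsJAlg e α) (hm : MartindaleJ e α) (k : ℕ) :
    ∀ x ∈ eigSet e α,
      (∀ ws : List A, ws.length = k → (∀ w ∈ ws, w ∈ eigSet e (0:F)) → Lmul ws x = 0) →
      x = 0 := by
  induction k with
  | zero =>
    intro x _ hk
    have := hk [] rfl (by simp)
    simpa [Lmul_nil] using this
  | succ k ih =>
    intro x hx hk
    refine hm.2.2.2 x hx (fun w hw => ?_)
    refine ih (w * x) (mul0a h hw hx) (fun ws hlen hmem => ?_)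
    have := hk (ws ++ [w]) (by simp [hlen]) ?_
    · rwa [Lmul_append_single] at this
    · intro u hu
      rcases List.mem_append.mp hu with h' | h'
      · exact hmem u h'
      · simp at h'; subst h'; exact hw

/-- Peeling for A₀. -/
theorem peel_0 (h : IsJAlg e α) (hm : MartindaleJ e α) (k : ℕ) :
    ∀ x ∈ eigSet e (0:F),
      (∀ ws : List A, ws.length = k → (∀ w ∈ ws, w ∈ eigSet e (0:F)) → Lmul ws x = 0) →
      x = 0 := by
  induction k with
  | zero =>
    intro x _ hk
    have := hk [] rfl (by simp)
    simpa [Lmul_nil] using this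
  | succ k ih =>
    intro x hx hk
    refine hm.2.2.1 x hx (fun w hw => ?_)
    refine ih (w * x) (mul00 h hw hx) (fun ws hlen hmem => ?_)
    have := hk (ws ++ [w]) (by simp [hlen]) ?_
    · rwa [Lmul_append_single] at this
    · intro u hu
      rcases List.mem_append.mp hu with h' | h'
      · exact hmem u h'
      · simp at h'; subst h'; exact hw

/-- LP: if all A₀-chains of length k ≥ 1 kill x, then the A₀ and A_α parts of x vanish:
x lies in A₁. Provide via explicit decomposition. -/
theorem chains_kill_mem1 (h : IsJAlg e α) (hm : MartindaleJ e α) {k : ℕ} (hk : k ≠ 0)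
    {x : A} (hkill : ∀ ws : List A, ws.length = k → (∀ w ∈ ws, w ∈ eigSet e (0:F)) →
      Lmul ws x = 0) : x ∈ eigSet e (1:F) := by
  obtain ⟨x1, h1, x0, h0, xa, ha, hdec⟩ := h.decomp x
  have key : ∀ ws : List A, ws.length = k → (∀ w ∈ ws, w ∈ eigSet e (0:F)) →
      Lmul ws x0 = 0 ∧ Lmul ws xa = 0 := by
    intro ws hlen hmem
    have hne : ws ≠ [] := by
      intro hcon; subst hcon; simp at hlen; exact hk hlen.symm
    have hx1 : Lmul ws x1 = 0 := Lmul_A0_A1_zero h hne hmem h1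
    have := hkill ws hlen hmem
    rw [hdec, Lmul_add, Lmul_add, hx1, zero_add] at this
    exact add_0a_zero h (Lmul_A0_A0 h hmem h0) (Lmul_A0_Aa h hmem ha) this
  have hx0 : x0 = 0 := peel_0 h hm k x0 h0 (fun ws hl hmem => (key ws hl hmem).1)
  have hxa : xa = 0 := peel_a h hm k xa ha (fun ws hl hmem => (key ws hl hmem).2)
  rw [hdec, hx0, hxa, add_zero, add_zero]
  exact h1

end Chains

/-! f basics -/

section FBasics
variable {e : A} {α : F} {f : List A → A} {r : ℕ}

theorem nf_perm (hf : IsNullifying f r) {l l' : List A} (hp : l.Perm l') : f l = f l' :=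
  hf.2.1 l l' hp

theorem nf_single (hf : IsNullifying f r) (x : A) : f [x] = 0 := hf.2.2.2.1 x

theorem nf_zero_append (hf : IsNullifying f r) {s : List A} (hs : s ≠ []) :
    f (s ++ [(0:A)]) = f s := hf.2.2.2.2.1 s hs

theorem nf_pair_zero (hf : IsNullifying f r) (x : A) : f [x, 0] = 0 := by
  have := nf_zero_append hf (s := [x]) (by simp)
  simpa [nf_single hf] using this

theorem nf_zero_pair (hf : IsNullifying f r) (x : A) : f [(0:A), x] = 0 := by
  rw [nf_perm hf (List.Perm.swap x 0 [])]
  exact nf_pair_zero hf x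

/-- merge: if f[X,Y] = 0 then sums can be split. -/
theorem nf_merge (hf : IsNullifying f r) {X Y : A} (hXY : f [X, Y] = 0) {s : List A}
    (hs : s ≠ []) : f (s ++ [X + Y]) = f (s ++ [X, Y]) := by
  have := (hf.2.2.1 s [X, Y] hs (by simp)).mpr hXY
  simpa using this

/-- extract: from equal values conclude the pair vanishes. -/
theorem nf_extract (hf : IsNullifying f r) {X Y : A} {s : List A} (hs : s ≠ [])
    (heq : f (s ++ [X + Y]) = f (s ++ [X, Y])) : f [X, Y] = 0 := by
  refine (hf.2.2.1 s [X, Y] hs (by simp)).mp ?_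
  simpa using heq

theorem nf_V (hf : IsNullifying f r) {ts : List A} (hlen : ts.length = r) (l : List A) :
    Lmul ts (f l) = f (l.map (Lmul ts)) := hf.2.2.2.2.2 ts hlen l

theorem nf_V2 (hf : IsNullifying f r) {ts : List A} (hlen : ts.length = r) (x y : A) :
    Lmul ts (f [x, y]) = f [Lmul ts x, Lmul ts y] := by
  simpa using nf_V hf hlen [x, y]

theorem nf_V3 (hf : IsNullifying f r) {ts : List A} (hlen : ts.length = r) (x y z : A) :
    Lmul ts (f [x, y, z]) = f [Lmul ts x, Lmul ts y, Lmul ts z] := by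
  simpa using nf_V hf hlen [x, y, z]

theorem nf_V4 (hf : IsNullifying f r) {ts : List A} (hlen : ts.length = r) (x y z w : A) :
    Lmul ts (f [x, y, z, w]) = f [Lmul ts x, Lmul ts y, Lmul ts z, Lmul ts w] := by
  simpa using nf_V hf hlen [x, y, z, w]

theorem nf_append_comm (hf : IsNullifying f r) (l1 l2 : List A) :
    f (l1 ++ l2) = f (l2 ++ l1) := nf_perm hf (List.perm_append_comm)

/-- drop middle zero in a triple -/
theorem nf_mid_zero (hf : IsNullifying f r) (x y : A) : f [x, 0, y] = f [x, y] := by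
  have hp : ([x, 0, y] : List A).Perm [x, y, 0] := List.Perm.cons x (List.Perm.swap y 0 [])
  rw [nf_perm hf hp]
  exact nf_zero_append hf (s := [x, y]) (by simp)

/-- drop front zero in a triple -/
theorem nf_front_zero (hf : IsNullifying f r) (x y : A) : f [(0:A), x, y] = f [x, y] := by
  have h1 : f ([(0:A)] ++ [x, y]) = f ([x, y] ++ [0]) := nf_append_comm hf [0] [x, y]
  have h2 : f ([x, y] ++ [(0:A)]) = f [x, y] := nf_zero_append hf (by simp)
  calc f [(0:A), x, y] = f ([(0:A)] ++ [x, y]) := by norm_num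
    _ = f ([x, y] ++ [0]) := h1
    _ = f [x, y] := h2

/-- f [0, a, 0, b] = f [a, b] -/
theorem nf_two_zeros (hf : IsNullifying f r) (a b : A) : f [(0:A), a, 0, b] = f [a, b] := by
  have h1 : f ([(0:A)] ++ [a, 0, b]) = f ([a, 0, b] ++ [0]) := nf_append_comm hf _ _
  have h2 : f ([a, 0, b] ++ [(0:A)]) = f [a, 0, b] := nf_zero_append hf (by simp)
  have h3 : f [a, (0:A), b] = f [a, b] := nf_mid_zero hf a b
  calc f [(0:A), a, 0, b] = f ([(0:A)] ++ [a, 0, b]) := by norm_num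
    _ = f ([a, 0, b] ++ [0]) := h1
    _ = f [a, (0:A), b] := h2
    _ = f [a, b] := h3

end FBasics

/-! Main lemma chain -/

section MainChain
variable {e : A} {α : F} {f : List A → A} {r : ℕ}

theorem e_pow_zero_mem0 (h : IsJAlg e α) {k : ℕ} (hk : k ≠ 0) {c : A}
    (hz : Lmul (List.replicate k e) c = 0) : c ∈ eigSet e (0:F) := by
  obtain ⟨c1, h1, c0, h0, ca, ha, hdec⟩ := h.decomp c
  have hLc : Lmul (List.replicate k e) c = c1 + (α ^ k) • ca := by
    rw [hdec, Lmul_add, Lmul_add, Lmul_repl_e k h1, Lmul_repl_e k h0, Lmul_repl_e k ha,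
        one_pow, one_smul, zero_pow hk, zero_smul, add_zero]
  rw [hLc] at hz
  have huniq := uniq_zero h h1 (eig_zero e 0) (eig_smul (α^k) ha)
    (by rw [add_zero]; exact hz)
  have hca : ca = 0 := smul_cancel (pow_ne_zero k h.hα0) huniq.2.2
  rw [hdec, huniq.1, hca, zero_add, add_zero]
  exact h0

theorem len_ne_nil {ws : List A} {k : ℕ} (hk : k ≠ 0) (hlen : ws.length = k) : ws ≠ [] := by
  intro hcon; subst hcon; simp at hlen; exact hk hlen.symm

/-- (1,0) pairs vanish -/
theorem L_pair10 (h : IsJAlg e α) (hm : MartindaleJ e α) (hf : IsNullifying f r)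
    {p z : A} (hp : p ∈ eigSet e (1:F)) (hz : z ∈ eigSet e (0:F)) : f [p, z] = 0 := by
  have hr : 0 < r := hf.1
  have hrepl : (List.replicate r e).length = r := by simp
  have hc0 : f [p, z] ∈ eigSet e (0:F) := by
    refine e_pow_zero_mem0 h hr.ne' ?_
    rw [nf_V2 hf hrepl p z, Lmul_repl_e r hp, Lmul_repl_e r hz, one_pow, one_smul,
        zero_pow hr.ne', zero_smul]
    exact nf_pair_zero hf p
  refine peel_0 h hm r _ hc0 (fun ws hlen hmem => ?_)
  rw [nf_V2 hf hlen p z, Lmul_A0_A1_zero h (len_ne_nil hr.ne' hlen) hmem hp]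
  exact nf_zero_pair hf _

/-- (0,α) pairs lie in A₀ -/
theorem L_mem0a (h : IsJAlg e α) (hf : IsNullifying f r)
    {z b : A} (hz : z ∈ eigSet e (0:F)) (hb : b ∈ eigSet e α) :
    f [z, b] ∈ eigSet e (0:F) := by
  have hr : 0 < r := hf.1
  have hrepl : (List.replicate r e).length = r := by simp
  refine e_pow_zero_mem0 h hr.ne' ?_
  rw [nf_V2 hf hrepl z b, Lmul_repl_e r hz, zero_pow hr.ne', zero_smul]
  exact nf_zero_pair hf _

/-- triple (α,1,0) lies in A₁ ⊕ A₀ -/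
theorem L_T (h : IsJAlg e α) (hm : MartindaleJ e α) (hf : IsNullifying f r)
    {x p z : A} (hx : x ∈ eigSet e α) (hp : p ∈ eigSet e (1:F)) (hz : z ∈ eigSet e (0:F)) :
    ∃ d1 ∈ eigSet e (1:F), ∃ d0 ∈ eigSet e (0:F), f [x, p, z] = d1 + d0 := by
  have hr : 0 < r := hf.1
  obtain ⟨d1, h1, d0, h0, da, ha, hdec⟩ := h.decomp (f [x, p, z])
  have hda : da = 0 := by
    refine peel_a h hm r da ha (fun ws hlen hmem => ?_)
    have hne : ws ≠ [] := len_ne_nil hr.ne' hlen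
    have hv : Lmul ws (f [x, p, z]) = f [Lmul ws x, Lmul ws z] := by
      rw [nf_V3 hf hlen, Lmul_A0_A1_zero h hne hmem hp]
      exact nf_mid_zero hf _ _
    have hmem0 : f [Lmul ws x, Lmul ws z] ∈ eigSet e (0:F) := by
      rw [nf_perm hf (List.Perm.swap (Lmul ws z) (Lmul ws x) [])]
      exact L_mem0a h hf (Lmul_A0_A0 h hmem hz) (Lmul_A0_Aa h hmem hx)
    have hsplit : Lmul ws (f [x, p, z]) = Lmul ws d0 + Lmul ws da := by
      rw [hdec, Lmul_add, Lmul_add, Lmul_A0_A1_zero h hne hmem h1, zero_add]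
    have h2 : Lmul ws d0 + Lmul ws da = f [Lmul ws x, Lmul ws z] := hsplit.symm.trans hv
    have h3 : (Lmul ws d0 - f [Lmul ws x, Lmul ws z]) + Lmul ws da = 0 := by
      rw [sub_add_eq_add_sub, h2, sub_self]
    exact (add_0a_zero h (eig_sub (Lmul_A0_A0 h hmem h0) hmem0)
      (Lmul_A0_Aa h hmem ha) h3).2
  exact ⟨d1, h1, d0, h0, by rw [hdec, hda, add_zero]⟩

/-- (0,α) pairs vanish -/
theorem L_pair0a (h : IsJAlg e α) (hm : MartindaleJ e α) (hf : IsNullifying f r)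
    {z b : A} (hz : z ∈ eigSet e (0:F)) (hb : b ∈ eigSet e α) : f [z, b] = 0 := by
  have hr : 0 < r := hf.1
  have hc0 : f [z, b] ∈ eigSet e (0:F) := L_mem0a h hf hz hb
  refine hm.2.1 _ hc0 (fun t ht => ?_)
  have htc : t * f [z, b] ∈ eigSet e α := by rw [mul_comm]; exact mul0a h hc0 ht
  obtain ⟨q1, hq1, q0, hq0, hqd⟩ := h.faa t ht b hb
  have htz : t * z ∈ eigSet e α := mula0 h ht hz
  by_cases hr1 : r = 1
  · have hlen : ([t] : List A).length = r := by simp [hr1]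
    have hv : t * f [z, b] = f [t * z, t * b] := by
      have := nf_V2 hf hlen z b
      simpa [Lmul] using this
    have hsplit : f [t * z, q1 + q0] = f [t * z, q1, q0] := by
      have := nf_merge hf (L_pair10 h hm hf hq1 hq0) (s := [t * z]) (by simp)
      simpa using this
    obtain ⟨d1, hd1, d0, hd0, hT⟩ := L_T h hm hf htz hq1 hq0
    have heq : t * f [z, b] = d1 + d0 := by rw [hv, hqd, hsplit, hT]
    exact mem_a_add10 h htc hd1 hd0 heq
  · refine peel_a h hm (r - 1) _ htc (fun ws hlen hmem => ?_)
    have hlen' : (ws ++ [t]).length = r := by simp [hlen]; omega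
    have hv : Lmul ws (t * f [z, b]) = f [Lmul ws (t * z), Lmul ws (t * b)] := by
      rw [← Lmul_append_single, ← Lmul_append_single, ← Lmul_append_single, nf_V2 hf hlen']
    have hwsne : ws ≠ [] := len_ne_nil (by omega) hlen
    have hs2 : Lmul ws (t * b) ∈ eigSet e (0:F) := by
      rw [hqd, Lmul_add, Lmul_A0_A1_zero h hwsne hmem hq1, zero_add]
      exact Lmul_A0_A0 h hmem hq0
    have hs1 : Lmul ws (t * z) ∈ eigSet e α := Lmul_A0_Aa h hmem htz
    have hval0 : f [Lmul ws (t * z), Lmul ws (t * b)] ∈ eigSet e (0:F) := by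
      rw [nf_perm hf (List.Perm.swap (Lmul ws (t * b)) (Lmul ws (t * z)) [])]
      exact L_mem0a h hf hs2 hs1
    have hvalA : Lmul ws (t * f [z, b]) ∈ eigSet e α := Lmul_A0_Aa h hmem htc
    have hval0' : Lmul ws (t * f [z, b]) ∈ eigSet e (0:F) := hv ▸ hval0
    exact mem_a0_zero h hvalA hval0'

/-- (1,α) pairs vanish -/
theorem L_pair1a (h : IsJAlg e α) (hm : MartindaleJ e α) (hf : IsNullifying f r)
    {p b : A} (hp : p ∈ eigSet e (1:F)) (hb : b ∈ eigSet e α) : f [p, b] = 0 := by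
  have hr : 0 < r := hf.1
  have hc1 : f [p, b] ∈ eigSet e (1:F) := by
    refine chains_kill_mem1 h hm hr.ne' (fun ws hlen hmem => ?_)
    rw [nf_V2 hf hlen p b, Lmul_A0_A1_zero h (len_ne_nil hr.ne' hlen) hmem hp]
    exact nf_zero_pair hf _
  refine hm.1 _ hc1 (fun t ht => ?_)
  have htc : t * f [p, b] ∈ eigSet e α := by rw [mul_comm]; exact mul1a h hc1 ht
  obtain ⟨q1, hq1, q0, hq0, hqd⟩ := h.faa t ht b hb
  have htp : t * p ∈ eigSet e α := mula1 h ht hp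
  by_cases hr1 : r = 1
  · have hlen : ([t] : List A).length = r := by simp [hr1]
    have hv : t * f [p, b] = f [t * p, t * b] := by
      have := nf_V2 hf hlen p b
      simpa [Lmul] using this
    have hsplit : f [t * p, q1 + q0] = f [t * p, q1, q0] := by
      have := nf_merge hf (L_pair10 h hm hf hq1 hq0) (s := [t * p]) (by simp)
      simpa using this
    obtain ⟨d1, hd1, d0, hd0, hT⟩ := L_T h hm hf htp hq1 hq0
    have heq : t * f [p, b] = d1 + d0 := by rw [hv, hqd, hsplit, hT]
    exact mem_a_add10 h htc hd1 hd0 heq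
  · refine peel_a h hm (r - 1) _ htc (fun ws hlen hmem => ?_)
    have hlen' : (ws ++ [t]).length = r := by simp [hlen]; omega
    have hv : Lmul ws (t * f [p, b]) = f [Lmul ws (t * p), Lmul ws (t * b)] := by
      rw [← Lmul_append_single, ← Lmul_append_single, ← Lmul_append_single, nf_V2 hf hlen']
    have hwsne : ws ≠ [] := len_ne_nil (by omega) hlen
    have hs2 : Lmul ws (t * b) ∈ eigSet e (0:F) := by
      rw [hqd, Lmul_add, Lmul_A0_A1_zero h hwsne hmem hq1, zero_add]
      exact Lmul_A0_A0 h hmem hq0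
    have hs1 : Lmul ws (t * p) ∈ eigSet e α := Lmul_A0_Aa h hmem htp
    have hval0 : f [Lmul ws (t * p), Lmul ws (t * b)] = 0 := by
      rw [nf_perm hf (List.Perm.swap (Lmul ws (t * b)) (Lmul ws (t * p)) [])]
      exact L_pair0a h hm hf hs2 hs1
    rw [hv, hval0]

/-- FACT A: the triple (1,0,α) vanishes. -/
theorem L_factA (h : IsJAlg e α) (hm : MartindaleJ e α) (hf : IsNullifying f r)
    {p z x : A} (hp : p ∈ eigSet e (1:F)) (hz : z ∈ eigSet e (0:F)) (hx : x ∈ eigSet e α) :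
    f [p, z, x] = 0 := by
  have hr : 0 < r := hf.1
  have hrepl : (List.replicate r e).length = r := by simp
  have hmem0 : f [p, z, x] ∈ eigSet e (0:F) := by
    refine e_pow_zero_mem0 h hr.ne' ?_
    rw [nf_V3 hf hrepl, Lmul_repl_e r hp, Lmul_repl_e r hz, Lmul_repl_e r hx, one_pow,
        one_smul, zero_pow hr.ne', zero_smul, nf_mid_zero hf]
    exact L_pair1a h hm hf hp (eig_smul _ hx)
  refine peel_0 h hm r _ hmem0 (fun ws hlen hmem => ?_)
  rw [nf_V3 hf hlen, Lmul_A0_A1_zero h (len_ne_nil hr.ne' hlen) hmem hp, nf_front_zero hf]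
  exact L_pair0a h hm hf (Lmul_A0_A0 h hmem hz) (Lmul_A0_Aa h hmem hx)

/-- FACT B: `f(y, w·v) = 0` for `y, v ∈ A_α`, `w ∈ A₀`. -/
theorem L_B (h : IsJAlg e α) (hm : MartindaleJ e α) (hf : IsNullifying f r)
    {y w v : A} (hy : y ∈ eigSet e α) (hw : w ∈ eigSet e (0:F)) (hv : v ∈ eigSet e α) :
    f [y, w * v] = 0 := by
  have hr : 0 < r := hf.1
  have hane : (α : F) ≠ 0 := h.hα0
  set γ := (α ^ r)⁻¹ with hγ
  set β := (α ^ (r - 1))⁻¹ with hβ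
  have hx1 : γ • e ∈ eigSet e (1:F) := eig_smul γ (e_mem1 h)
  have hb : β • v ∈ eigSet e α := eig_smul β hv
  obtain ⟨q1, hq1, q0, hq0, hqd⟩ := h.faa y hy (β • v) hb
  have hrsucc : (r - 1) + 1 = r := Nat.succ_pred_eq_of_pos hr
  have hpow : α ^ (r - 1) * α = α ^ r := by rw [← pow_succ, hrsucc]
  set t₀ := w + y with ht₀
  set ts := List.replicate (r - 1) e ++ [t₀] with hts
  have hlen : ts.length = r := by simp [hts, hrsucc]
  have hwv : w * v ∈ eigSet e α := mul0a h hw hv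
  -- slot 1 computes to y
  have hslot1 : Lmul ts (γ • e) = y := by
    rw [hts, Lmul_append_single]
    have hye : y * e = α • y := by
      rw [mul_comm]; exact hy
    have h1 : t₀ * (γ • e) = (γ * α) • y := by
      rw [ht₀, add_mul, mul_smul_comm, mul_smul_comm, mul01 h hw (e_mem1 h), smul_zero,
          zero_add, hye, smul_smul]
    have hscal : γ * α * α ^ (r - 1) = 1 := by
      rw [mul_assoc, mul_comm α, hpow, hγ]
      exact inv_mul_cancel₀ (pow_ne_zero r hane)
    rw [h1, Lmul_smul, Lmul_repl_e (r - 1) hy, smul_smul, hscal, one_smul]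
  have hβα : β * α ^ (r - 1) = 1 := by
    rw [hβ]; exact inv_mul_cancel₀ (pow_ne_zero _ hane)
  have ht0b : t₀ * (β • v) = β • (w * v) + (q1 + q0) := by
    rw [ht₀, add_mul, mul_smul_comm, hqd]
  have hcost10 : f [q1, q0] = 0 := L_pair10 h hm hf hq1 hq0
  by_cases hr1 : r = 1
  · -- r = 1 case
    have hrepl0 : List.replicate (r - 1) e = ([] : List A) := by simp [hr1]
    have hβ1 : β = 1 := by
      rw [hβ, hr1]; norm_num
    have hslot2 : Lmul ts (β • v) = w * v + (q1 + q0) := by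
      rw [hts, Lmul_append_single, hrepl0, Lmul_nil, ht0b, hβ1, one_smul]
    have h0 : f [y, w * v + (q1 + q0)] = 0 := by
      rw [← hslot1, ← hslot2, ← nf_V2 hf hlen, L_pair1a h hm hf hx1 hb, Lmul_zero]
    have hcost1 : f [q1 + q0, w * v] = 0 := by
      have e1 : f [w * v, q1 + q0] = f [w * v, q1, q0] := by
        have := nf_merge hf hcost10 (s := [w * v]) (by simp)
        simpa using this
      have e2 : f [w * v, q1, q0] = f [q1, q0, w * v] := by
        simpa using nf_append_comm hf [w * v] [q1, q0]
      have e3 : f [q1, q0, w * v] = 0 := L_factA h hm hf hq1 hq0 hwv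
      rw [nf_perm hf (List.Perm.swap (w * v) (q1 + q0) []), e1, e2, e3]
    have h2 : f [y, (q1 + q0) + w * v] = f [y, q1 + q0, w * v] := by
      have := nf_merge hf hcost1 (s := [y]) (by simp)
      simpa using this
    have h3 : f [y, q1 + q0, w * v] = 0 := by
      rw [← h2, add_comm (q1 + q0) (w * v)]
      exact h0
    have h4 : f [y, w * v, q1 + q0] = f [y, w * v, q1, q0] := by
      have := nf_merge hf hcost10 (s := [y, w * v]) (by simp)
      simpa using this
    have h5 : f [y, w * v, q1, q0] = 0 := by
      rw [← h4, ← nf_perm hf (List.Perm.cons y (List.Perm.swap (w * v) (q1 + q0) []))]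
      exact h3
    refine nf_extract hf (s := [q1, q0]) (by simp) ?_
    have hL : f [q1, q0, y + w * v] = 0 := L_factA h hm hf hq1 hq0 (eig_add hy hwv)
    have hR : f [q1, q0, y, w * v] = f [y, w * v, q1, q0] := by
      simpa using nf_append_comm hf [q1, q0] [y, w * v]
    show f ([q1, q0] ++ [y + w * v]) = f ([q1, q0] ++ [y, w * v])
    simpa using hL.trans (hR.trans h5).symm
  · -- r ≥ 2 case
    have hr2 : r - 1 ≠ 0 := by omega
    have hslot2 : Lmul ts (β • v) = w * v + q1 := by
      rw [hts, Lmul_append_single, ht0b, Lmul_add, Lmul_add, Lmul_smul,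
          Lmul_repl_e (r - 1) hwv, smul_smul, hβα, one_smul,
          Lmul_repl_e (r - 1) hq1, one_pow, one_smul,
          Lmul_repl_e (r - 1) hq0, zero_pow hr2, zero_smul, add_zero]
    have h0 : f [y, w * v + q1] = 0 := by
      rw [← hslot1, ← hslot2, ← nf_V2 hf hlen, L_pair1a h hm hf hx1 hb, Lmul_zero]
    have hcost : f [w * v, q1] = 0 := by
      rw [nf_perm hf (List.Perm.swap q1 (w * v) [])]
      exact L_pair1a h hm hf hq1 hwv
    have h3 : f [y, w * v, q1] = 0 := by
      have := nf_merge hf hcost (s := [y]) (by simp)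
      rw [← (by simpa using this : f [y, w * v + q1] = f [y, w * v, q1])]
      exact h0
    refine nf_extract hf (s := [q1]) (by simp) ?_
    have hL : f [q1, y + w * v] = 0 := L_pair1a h hm hf hq1 (eig_add hy hwv)
    have hR : f [q1, y, w * v] = f [y, w * v, q1] := by
      simpa using nf_append_comm hf [q1] [y, w * v]
    show f ([q1] ++ [y + w * v]) = f ([q1] ++ [y, w * v])
    simpa using hL.trans (hR.trans h3).symm


/-- (0,0) pairs vanish. -/
theorem L_pair00 (h : IsJAlg e α) (hm : MartindaleJ e α) (hf : IsNullifying f r)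
    {z z' : A} (hz : z ∈ eigSet e (0:F)) (hz' : z' ∈ eigSet e (0:F)) : f [z, z'] = 0 := by
  have hr : 0 < r := hf.1
  have hrepl : (List.replicate r e).length = r := by simp
  have hc0 : f [z, z'] ∈ eigSet e (0:F) := by
    refine e_pow_zero_mem0 h hr.ne' ?_
    rw [nf_V2 hf hrepl, Lmul_repl_e r hz, Lmul_repl_e r hz', zero_pow hr.ne', zero_smul,
        zero_smul]
    exact nf_pair_zero hf 0
  refine hm.2.1 _ hc0 (fun t ht => ?_)
  have htc : t * f [z, z'] ∈ eigSet e α := by rw [mul_comm]; exact mul0a h hc0 ht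
  refine peel_a h hm (r - 1) _ htc (fun ws hlen hmem => ?_)
  have hlen' : (ws ++ [t]).length = r := by simp [hlen]; omega
  have hv : Lmul ws (t * f [z, z']) = f [Lmul ws (t * z), Lmul ws (t * z')] := by
    rw [← Lmul_append_single, nf_V2 hf hlen', Lmul_append_single, Lmul_append_single]
  rw [hv]
  rcases ws with _ | ⟨w₀, rest⟩
  · rw [Lmul_nil, Lmul_nil, show t * z' = z' * t from mul_comm t z']
    exact L_B h hm hf (mula0 h ht hz) hz' ht
  · rw [Lmul_cons, Lmul_cons]
    have hw₀ : w₀ ∈ eigSet e (0:F) := hmem w₀ (by simp)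
    have hrest : ∀ u ∈ rest, u ∈ eigSet e (0:F) := fun u hu => hmem u (by simp [hu])
    exact L_B h hm hf (mul0a h hw₀ (Lmul_A0_Aa h hrest (mula0 h ht hz))) hw₀
      (Lmul_A0_Aa h hrest (mula0 h ht hz'))

/-- (α,α) pairs vanish. -/
theorem L_pairaa (h : IsJAlg e α) (hm : MartindaleJ e α) (hf : IsNullifying f r)
    {a b : A} (ha : a ∈ eigSet e α) (hb : b ∈ eigSet e α) : f [a, b] = 0 := by
  have hr : 0 < r := hf.1
  have hc1 : f [a, b] ∈ eigSet e (1:F) := by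
    refine chains_kill_mem1 h hm hr.ne' (fun ws hlen hmem => ?_)
    rw [nf_V2 hf hlen]
    rcases ws with _ | ⟨w₀, rest⟩
    · exfalso; simp at hlen; omega
    · rw [Lmul_cons, Lmul_cons]
      have hw₀ : w₀ ∈ eigSet e (0:F) := hmem w₀ (by simp)
      have hrest : ∀ u ∈ rest, u ∈ eigSet e (0:F) := fun u hu => hmem u (by simp [hu])
      exact L_B h hm hf (mul0a h hw₀ (Lmul_A0_Aa h hrest ha)) hw₀ (Lmul_A0_Aa h hrest hb)
  refine hm.1 _ hc1 (fun t ht => ?_)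
  have htc : t * f [a, b] ∈ eigSet e α := by rw [mul_comm]; exact mul1a h hc1 ht
  obtain ⟨p1, hp1, p0, hp0, hpd⟩ := h.faa t ht a ha
  obtain ⟨q1, hq1, q0, hq0, hqd⟩ := h.faa t ht b hb
  by_cases hr1 : r = 1
  · have hlen : ([t] : List A).length = r := by simp [hr1]
    have hv : t * f [a, b] = f [t * a, t * b] := by
      have := nf_V2 hf hlen a b
      simpa [Lmul] using this
    have h1 : f [t * a, q1 + q0] = f [t * a, q1, q0] := by
      have := nf_merge hf (L_pair10 h hm hf hq1 hq0) (s := [t * a]) (by simp)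
      simpa using this
    have h2 : f [t * a, q1, q0] = f [q1, q0, t * a] := by
      simpa using nf_append_comm hf [t * a] [q1, q0]
    have h3 : f [q1, q0, p1 + p0] = f [q1, q0, p1, p0] := by
      have := nf_merge hf (L_pair10 h hm hf hp1 hp0) (s := [q1, q0]) (by simp)
      simpa using this
    have hQ : t * f [a, b] = f [q1, q0, p1, p0] := by
      rw [hv, hqd, h1, h2, hpd, h3]
    have hQ1 : f [q1, q0, p1, p0] ∈ eigSet e (1:F) := by
      refine chains_kill_mem1 h hm hr.ne' (fun ws hlen' hmem => ?_)
      have hne : ws ≠ [] := len_ne_nil hr.ne' hlen'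
      rw [nf_V4 hf hlen', Lmul_A0_A1_zero h hne hmem hq1, Lmul_A0_A1_zero h hne hmem hp1,
          nf_two_zeros hf]
      exact L_pair00 h hm hf (Lmul_A0_A0 h hmem hq0) (Lmul_A0_A0 h hmem hp0)
    exact mem_1a_zero h (hQ ▸ hQ1) htc
  · refine peel_a h hm (r - 1) _ htc (fun ws hlen hmem => ?_)
    have hlen' : (ws ++ [t]).length = r := by simp [hlen]; omega
    have hv : Lmul ws (t * f [a, b]) = f [Lmul ws (t * a), Lmul ws (t * b)] := by
      rw [← Lmul_append_single, nf_V2 hf hlen', Lmul_append_single, Lmul_append_single]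
    have hwsne : ws ≠ [] := len_ne_nil (by omega) hlen
    have hs1 : Lmul ws (t * a) ∈ eigSet e (0:F) := by
      rw [hpd, Lmul_add, Lmul_A0_A1_zero h hwsne hmem hp1, zero_add]
      exact Lmul_A0_A0 h hmem hp0
    have hs2 : Lmul ws (t * b) ∈ eigSet e (0:F) := by
      rw [hqd, Lmul_add, Lmul_A0_A1_zero h hwsne hmem hq1, zero_add]
      exact Lmul_A0_A0 h hmem hq0
    rw [hv]
    exact L_pair00 h hm hf hs1 hs2

/-- (1,1) pairs vanish. -/
theorem L_pair11 (h : IsJAlg e α) (hm : MartindaleJ e α) (hf : IsNullifying f r)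
    {p q : A} (hp : p ∈ eigSet e (1:F)) (hq : q ∈ eigSet e (1:F)) : f [p, q] = 0 := by
  have hr : 0 < r := hf.1
  have hc1 : f [p, q] ∈ eigSet e (1:F) := by
    refine chains_kill_mem1 h hm hr.ne' (fun ws hlen hmem => ?_)
    rw [nf_V2 hf hlen, Lmul_A0_A1_zero h (len_ne_nil hr.ne' hlen) hmem hp]
    exact nf_zero_pair hf _
  refine hm.1 _ hc1 (fun t ht => ?_)
  have htc : t * f [p, q] ∈ eigSet e α := by rw [mul_comm]; exact mul1a h hc1 ht
  refine peel_a h hm (r - 1) _ htc (fun ws hlen hmem => ?_)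
  have hlen' : (ws ++ [t]).length = r := by simp [hlen]; omega
  have hv : Lmul ws (t * f [p, q]) = f [Lmul ws (t * p), Lmul ws (t * q)] := by
    rw [← Lmul_append_single, nf_V2 hf hlen', Lmul_append_single, Lmul_append_single]
  rw [hv]
  exact L_pairaa h hm hf (Lmul_A0_Aa h hmem (mula1 h ht hp))
    (Lmul_A0_Aa h hmem (mula1 h ht hq))

end MainChain

end Infra

/-- Lemma 4.4: `f(a_i, b_i) = 0` for `a_i, b_i` in the same eigenspace,
for each `i ∈ {1, 0, α}`. -/
theorem jalg_nullifying_pair_same {F A : Type*} [Field F] [NonUnitalNonAssocCommRing A]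
    [Module F A] [SMulCommClass F A A] [IsScalarTower F A A]
    (e : A) (α : F) (h : IsJAlg e α) (hm : MartindaleJ e α)
    (f : List A → A) (r : ℕ) (hf : IsNullifying f r) :
    (∀ a ∈ eigSet e (1 : F), ∀ b ∈ eigSet e (1 : F), f [a, b] = 0) ∧
    (∀ a ∈ eigSet e (0 : F), ∀ b ∈ eigSet e (0 : F), f [a, b] = 0) ∧
    (∀ a ∈ eigSet e α, ∀ b ∈ eigSet e α, f [a, b] = 0) := by
  exact ⟨fun a ha b hb => L_pair11 h hm hf ha hb,
    fun a ha b hb => L_pair00 h hm hf ha hb,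
    fun a ha b hb => L_pairaa h hm hf ha hb⟩
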